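/- arXiv:1504.06135 — 4 statements merged into one kernel-verified Lean document; each statement's English description precedes it below -/
import Mathlib

section
/- Closure under unions for propositional inclusion logic: if φ is a formula of propositional inclusion logic and (Xᵢ)_{i∈I} is a family of teams each satisfying φ, then the union ⋃_{i∈I} Xᵢ satisfies φ. -/
inductive PLIncForm (V : Type) where
  | pos : V → PLIncForm V
  | neg : V → PLIncForm V
  | inc : List V → List V → PLIncForm V
  | conj : PLIncForm V → PLIncForm V → PLIncForm V
  | disj : PLIncForm V → PLIncForm V → PLIncForm V

def PLIncSat {V : Type} (X : Set (V → Bool)) : PLIncForm V → Prop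
  | .pos p => ∀ s ∈ X, s p = true
  | .neg p => ∀ s ∈ X, s p = false
  | .inc ps qs => ∀ s ∈ X, ∃ t ∈ X, ps.map s = qs.map t
  | .conj φ ψ => PLIncSat X φ ∧ PLIncSat X ψ
  | .disj φ ψ => ∃ Y Z, Y ∪ Z = X ∧ PLIncSat Y φ ∧ PLIncSat Z ψ

theorem plinc_union_closure {V : Type} (φ : PLIncForm V) {I : Type}
    (X : I → Set (V → Bool)) (h : ∀ i, PLIncSat (X i) φ) :
    PLIncSat (⋃ i, X i) φ := by
  induction φ generalizing X with
  | pos p =>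
    intro s hs
    obtain ⟨i, hi⟩ := Set.mem_iUnion.1 hs
    exact h i s hi
  | neg p =>
    intro s hs
    obtain ⟨i, hi⟩ := Set.mem_iUnion.1 hs
    exact h i s hi
  | inc ps qs =>
    intro s hs
    obtain ⟨i, hi⟩ := Set.mem_iUnion.1 hs
    obtain ⟨t, ht, he⟩ := h i s hi
    exact ⟨t, Set.mem_iUnion.2 ⟨i, ht⟩, he⟩
  | conj φ ψ ihφ ihψ =>
    exact ⟨ihφ X (fun i => (h i).1), ihψ X (fun i => (h i).2)⟩
  | disj φ ψ ihφ ihψ =>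
    choose Y Z hYZ hY hZ using h
    refine ⟨⋃ i, Y i, ⋃ i, Z i, ?_, ihφ Y hY, ihψ Z hZ⟩
    rw [← Set.iUnion_union_distrib]
    exact Set.iUnion_congr hYZ
end

section
/- Intuitionistic implication is definable: for every team X of assignments over a domain containing p, X ⊨ φ ⊸ ψ (i.e., every subteam Y ⊆ X satisfying φ also satisfies ψ) if and only if X ⊨ (∼φ ⊘ ψ) ⊗ ∼(p ∨ ¬p). -/
inductive TForm (V : Type) where
  | pos : V → TForm V
  | neg : V → TForm V
  | conj : TForm V → TForm V → TForm V
  | disj : TForm V → TForm V → TForm V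
  | cneg : TForm V → TForm V
  | idisj : TForm V → TForm V → TForm V
  | tensor : TForm V → TForm V → TForm V

def TSat {V : Type} (X : Set (V → Bool)) : TForm V → Prop
  | .pos p => ∀ s ∈ X, s p = true
  | .neg p => ∀ s ∈ X, s p = false
  | .conj φ ψ => TSat X φ ∧ TSat X ψ
  | .disj φ ψ => ∃ Y Z, Y ∪ Z = X ∧ TSat Y φ ∧ TSat Z ψ
  | .cneg φ => ¬ TSat X φ
  | .idisj φ ψ => TSat X φ ∨ TSat X ψ
  | .tensor φ ψ => ∀ Y Z : Set (V → Bool), Y ⊆ X → Z ⊆ X → Y ∪ Z = X →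
      TSat Y φ ∨ TSat Z ψ

lemma excl_mid {V : Type} (X : Set (V → Bool)) (p : V) :
    TSat X (.disj (.pos p) (.neg p)) := by
  refine ⟨{s ∈ X | s p = true}, {s ∈ X | s p = false}, ?_, ?_, ?_⟩
  · ext s; simp only [Set.mem_union, Set.mem_setOf_eq]
    constructor
    · rintro (⟨h, _⟩ | ⟨h, _⟩) <;> exact h
    · intro h; rcases Bool.eq_false_or_eq_true (s p) with hb | hb
      · exact Or.inl ⟨h, hb⟩
      · exact Or.inr ⟨h, hb⟩
  · intro s hs; exact hs.2
  · intro s hs; exact hs.2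

theorem intuitionistic_implication_definable {V : Type} (X : Set (V → Bool))
    (φ ψ : TForm V) (p : V) :
    (∀ Y ⊆ X, TSat Y φ → TSat Y ψ) ↔
      TSat X (.tensor (.idisj (.cneg φ) ψ) (.cneg (.disj (.pos p) (.neg p)))) := by
  constructor
  · intro H Y Z hY hZ hU
    left
    by_cases h : TSat Y φ
    · exact Or.inr (H Y hY h)
    · exact Or.inl h
  · intro H Y hY hφ
    have := H Y X hY (le_refl X) (Set.union_eq_self_of_subset_left hY)
    rcases this with (h | h) | h
    · exact absurd hφ h
    · exact h
    · exact absurd (excl_mid X p) h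
end

section
/- The dependence atom is equivalent to an intuitionistic implication of constancy atoms: for every team X, X ⊨ =(x₁,…,xₙ,y) if and only if for every subteam Y ⊆ X, if Y ⊨ =(xᵢ) for all i ≤ n, then Y ⊨ =(y). -/
theorem dep_iff_intuitionistic_implication {V : Type} (X : Set (V → Bool))
    (xs : List V) (y : V) :
    (∀ s ∈ X, ∀ t ∈ X, xs.map s = xs.map t → s y = t y) ↔
      (∀ Y ⊆ X, (∀ x ∈ xs, ∀ s ∈ Y, ∀ t ∈ Y, s x = t x) →
        (∀ s ∈ Y, ∀ t ∈ Y, s y = t y)) := by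
  constructor
  · intro h Y hYX hconst s hs t ht
    exact h s (hYX hs) t (hYX ht)
      (List.map_congr_left fun x hx => hconst x hx s hs t ht)
  · intro h s hs t ht hmap
    refine h {s, t} ?_ ?_ s (by simp) t (by simp)
    · intro u hu
      rcases hu with hu | hu <;> simp_all
    · intro x hx u hu v hv
      have : s x = t x := by
        have := congrArg (fun (l : List Bool) (i : Nat) => l[i]?) hmap
        -- use List.map equality pointwise
        exact List.map_eq_map_iff.mp hmap x hx
      rcases hu with hu | hu <;> rcases hv with hv | hv <;> simp_all
end

section
/- Maximality is the classical negation of disjoined constancy atoms: for every team X with domain including x₁,…,xₙ, X fails to satisfy ⋁_{i=1}^n =(xᵢ) (team-semantic disjunction of the constancy atoms) if and only if X is maximal over x₁,…,xₙ, i.e., {(s(x₁),…,s(xₙ)) : s ∈ X} = {0,1}ⁿ. -/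
theorem max_iff_not_disj_constancy {V : Type} {n : ℕ} (X : Set (V → Bool))
    (x : Fin n → V) :
    (¬ ∃ Y : Fin n → Set (V → Bool), (⋃ i, Y i) = X ∧
        ∀ i, ∀ s ∈ Y i, ∀ t ∈ Y i, s (x i) = t (x i)) ↔
      (fun s : V → Bool => fun i => s (x i)) '' X = Set.univ := by
  constructor
  · intro h
    by_contra him
    apply h
    -- there is some b : Fin n → Bool not in the image
    have : ∃ b : Fin n → Bool, b ∉ (fun s : V → Bool => fun i => s (x i)) '' X := by
      by_contra hb
      push_neg at hb
      exact him (Set.eq_univ_of_forall hb)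
    obtain ⟨b, hb⟩ := this
    refine ⟨fun i => {s ∈ X | s (x i) = !(b i)}, ?_, ?_⟩
    · ext s
      simp only [Set.mem_iUnion, Set.mem_setOf_eq]
      constructor
      · rintro ⟨i, hs, _⟩; exact hs
      · intro hs
        have : (fun i => s (x i)) ≠ b := by
          intro hbe
          exact hb ⟨s, hs, hbe⟩
        obtain ⟨i, hi⟩ := Function.ne_iff.mp this
        exact ⟨i, hs, by cases h1 : s (x i) <;> cases h2 : b i <;> simp_all⟩
    · intro i s hs t ht
      simp only [Set.mem_setOf_eq] at hs ht
      rw [hs.2, ht.2]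
  · rintro him ⟨Y, hYU, hYc⟩
    classical
    -- for each i, a "forbidden" value b i avoiding the constant value of Y i
    have hchoice : ∀ i, ∃ bi : Bool, ∀ s ∈ Y i, s (x i) ≠ bi := by
      intro i
      by_cases hne : (Y i).Nonempty
      · obtain ⟨s0, hs0⟩ := hne
        refine ⟨!(s0 (x i)), fun s hs => ?_⟩
        rw [hYc i s hs s0 hs0]
        simp
      · exact ⟨true, fun s hs => absurd ⟨s, hs⟩ hne⟩
    choose b hbspec using hchoice
    have : b ∈ (fun s : V → Bool => fun i => s (x i)) '' X := by
      rw [him]; trivial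
    obtain ⟨s, hsX, hseq⟩ := this
    rw [← hYU] at hsX
    obtain ⟨i, hi⟩ := Set.mem_iUnion.mp hsX
    exact hbspec i s hi (congrFun hseq i)
end
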